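/- arXiv:0805.2077 — 5 statements merged into one kernel-verified Lean document; each statement's English description precedes it below -/
import Mathlib

section
/- Any non-empty finite word w over a totally ordered finite alphabet can be uniquely expressed as a non-increasing concatenation w = ℓ₀ℓ₁⋯ℓₙ of Lyndon words, i.e., each ℓᵢ is a Lyndon word and ℓ₀ ≥ ℓ₁ ≥ ⋯ ≥ ℓₙ in the lexicographic order. -/
/-- A finite word is a Lyndon word if it is nonempty and lexicographically
strictly smaller than all of its proper non-empty suffixes. -/
def IsLyndon {α : Type*} [LinearOrder α] (w : List α) : Prop :=
  w ≠ [] ∧ ∀ i, 0 < i → i < w.length → List.Lex (· < ·) w (w.drop i)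

/-!
Existence: merging two adjacent Lyndon factors `u < v` gives the Lyndon word `uv`, so starting
from the letters of `w` one can merge until the factors are non-increasing; concretely, `w` is
processed from the right and each new letter absorbs the following factors while it is smaller
than them.

Uniqueness: the first factor `x` of a non-increasing Lyndon factorization is the longest Lyndon
prefix of the word. A longer Lyndon prefix `y` would end inside some later factor `ℓ`, and the
part of `y` lying in `ℓ` is a proper suffix `s` of `y` with `y < s ≤ ℓ ≤ x ≤ y`.
-/

section LyndonFactorization

variable {α : Type*} [LinearOrder α]

theorem List.isPrefix_or_forall_append_lt_of_lt {s t : List α} (h : s < t) :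
    s <+: t ∨ ∀ u v : List α, s ++ u < t ++ v := by
  induction h with
  | nil => exact .inl nil_prefix
  | rel h => exact .inr fun _ _ => .rel h
  | cons _ ih =>
    rcases ih with hst | hlt
    · exact .inl (cons_prefix_cons.mpr ⟨rfl, hst⟩)
    · exact .inr fun u v => .cons (hlt u v)

theorem isLyndon_singleton (a : α) : IsLyndon [a] :=
  ⟨List.cons_ne_nil a [], fun i hi₀ hi => by
    rw [List.length_singleton] at hi
    omega⟩

namespace IsLyndon

variable {u v w x y : List α}

theorem ne_nil (hw : IsLyndon w) : w ≠ [] := hw.1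

theorem lt_drop (hw : IsLyndon w) {i : ℕ} (hi₀ : 0 < i) (hi : i < w.length) : w < w.drop i :=
  hw.2 i hi₀ hi

theorem append_lt_right (hu : u ≠ []) (hv : IsLyndon v) (huv : u < v) : u ++ v < v := by
  rcases List.isPrefix_or_forall_append_lt_of_lt huv with ⟨t, rfl⟩ | hlt
  · have ht : t ≠ [] := by
      rintro rfl
      simp at huv
    have hvt : u ++ t < t := by
      simpa using hv.lt_drop (i := u.length) (List.length_pos_iff.mpr hu)
        (by simpa using List.length_pos_iff.mpr ht)
    exact List.append_left_lt hvt
  · simpa using hlt v []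

theorem append (hu : IsLyndon u) (hv : IsLyndon v) (huv : u < v) : IsLyndon (u ++ v) := by
  refine ⟨by simp [hu.ne_nil], fun i hi₀ hi => ?_⟩
  rw [List.length_append] at hi
  rcases lt_trichotomy i u.length with hiu | rfl | hui
  · rw [List.drop_append_of_le_length hiu.le]
    rcases List.isPrefix_or_forall_append_lt_of_lt (hu.lt_drop hi₀ hiu) with hpre | hlt
    · have := hpre.length_le
      rw [List.length_drop] at this
      omega
    · exact hlt v v
  · simpa using append_lt_right hu.ne_nil hv huv
  · rw [List.drop_append, List.drop_eq_nil_of_le hui.le, List.nil_append]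
    exact (append_lt_right hu.ne_nil hv huv).trans (hv.lt_drop (by omega) (by omega))

theorem not_drop_isPrefix_flatten (hy : IsLyndon y) {L : List (List α)} (hL : ∀ ℓ ∈ L, ℓ ≤ y)
    {i : ℕ} (hi₀ : 0 < i) (hi : i < y.length) : ¬ y.drop i <+: L.flatten := by
  induction L generalizing i with
  | nil =>
    simp only [List.flatten_nil, List.prefix_nil, List.drop_eq_nil_iff]
    omega
  | cons ℓ L ih =>
    rw [List.flatten_cons]
    intro hpre
    have hyz : y < y.drop i := hy.lt_drop hi₀ hi
    by_cases hlen : (y.drop i).length ≤ ℓ.length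
    · have hzℓ : y.drop i <+: ℓ := List.prefix_of_prefix_length_le hpre (ℓ.prefix_append _) hlen
      -- `IsPrefix.le` is stated for core's `≤` on lists; `not_lt` turns it into Mathlib's.
      exact (hyz.trans_le ((not_lt.mp hzℓ.le).trans (hL ℓ List.mem_cons_self))).false
    · obtain ⟨t, ht⟩ := List.prefix_of_prefix_length_le (ℓ.prefix_append _) hpre (by omega)
      have hdrop : y.drop (i + ℓ.length) = t := by
        rw [← List.drop_drop, ← ht, List.drop_left]
      rw [List.length_drop] at hlen
      refine ih (fun ℓ' h => hL ℓ' (List.mem_cons_of_mem ℓ h)) (i := i + ℓ.length) (by omega)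
        (by omega) ?_
      rw [hdrop]
      rw [← ht] at hpre
      exact (List.prefix_append_right_inj ℓ).mp hpre

theorem length_le_of_isPrefix_append_flatten (hx : x ≠ []) {L : List (List α)}
    (hL : ∀ ℓ ∈ L, ℓ ≤ x) (hy : IsLyndon y) (hpre : y <+: x ++ L.flatten) :
    y.length ≤ x.length := by
  by_contra! hlen
  obtain ⟨t, rfl⟩ := List.prefix_of_prefix_length_le (x.prefix_append _) hpre hlen.le
  have hLy : ∀ ℓ ∈ L, ℓ ≤ x ++ t := fun ℓ h => (hL ℓ h).trans (not_lt.mp (x.prefix_append t).le)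
  refine hy.not_drop_isPrefix_flatten hLy (List.length_pos_iff.mpr hx) hlen ?_
  rw [List.drop_left]
  exact (List.prefix_append_right_inj x).mp hpre

end IsLyndon

def IsLyndonFactorization (L : List (List α)) : Prop :=
  (∀ l ∈ L, IsLyndon l) ∧ L.IsChain (fun x y => ¬ x < y)

namespace IsLyndonFactorization

variable {x : List α} {L M : List (List α)}

theorem nil : IsLyndonFactorization ([] : List (List α)) :=
  ⟨fun _ h => absurd h List.not_mem_nil, List.isChain_nil⟩

theorem head_isLyndon (h : IsLyndonFactorization (x :: L)) : IsLyndon x :=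
  h.1 x List.mem_cons_self

theorem tail (h : IsLyndonFactorization (x :: L)) : IsLyndonFactorization L :=
  ⟨fun l hl => h.1 l (List.mem_cons_of_mem x hl), h.2.tail⟩

theorem le_head (h : IsLyndonFactorization (x :: L)) : ∀ ℓ ∈ L, ℓ ≤ x := by
  have : Trans (fun x y : List α => ¬ x < y) (fun x y => ¬ x < y) (fun x y => ¬ x < y) :=
    ⟨fun hab hbc => not_lt.mpr ((not_lt.mp hbc).trans (not_lt.mp hab))⟩
  exact fun ℓ hℓ => not_lt.mp ((List.pairwise_cons.mp (List.isChain_iff_pairwise.mp h.2)).1 ℓ hℓ)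

theorem eq_of_flatten_eq (hL : IsLyndonFactorization L) (hM : IsLyndonFactorization M)
    (h : L.flatten = M.flatten) : L = M := by
  induction L generalizing M with
  | nil =>
    cases M with
    | nil => rfl
    | cons y M =>
      exact (hM.head_isLyndon.ne_nil (List.flatten_eq_nil_iff.mp h.symm y List.mem_cons_self)).elim
  | cons x L ih =>
    cases M with
    | nil =>
      exact (hL.head_isLyndon.ne_nil (List.flatten_eq_nil_iff.mp h x List.mem_cons_self)).elim
    | cons y M =>
      rw [List.flatten_cons, List.flatten_cons] at h
      have hyx : y.length ≤ x.length :=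
        IsLyndon.length_le_of_isPrefix_append_flatten hL.head_isLyndon.ne_nil hL.le_head
          hM.head_isLyndon (h ▸ y.prefix_append _)
      have hxy : x.length ≤ y.length :=
        IsLyndon.length_le_of_isPrefix_append_flatten hM.head_isLyndon.ne_nil hM.le_head
          hL.head_isLyndon (h ▸ x.prefix_append _)
      have hxy' : x <+: y :=
        List.prefix_of_prefix_length_le (x.prefix_append _) (h ▸ y.prefix_append _) hxy
      obtain rfl : x = y := hxy'.eq_of_length (hxy.antisymm hyx)
      rw [ih hL.tail hM.tail (List.append_cancel_left h)]

end IsLyndonFactorization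

def lyndonCons (x : List α) : List (List α) → List (List α)
  | [] => [x]
  | y :: M => if x < y then lyndonCons (x ++ y) M else x :: y :: M

def lyndonFactorization (w : List α) : List (List α) :=
  w.foldr (fun a => lyndonCons [a]) []

theorem flatten_lyndonCons (x : List α) (M : List (List α)) :
    (lyndonCons x M).flatten = x ++ M.flatten := by
  induction M generalizing x with
  | nil => simp [lyndonCons]
  | cons y M ih =>
    unfold lyndonCons
    split_ifs <;> simp [ih]

theorem isLyndonFactorization_lyndonCons {x : List α} {M : List (List α)} (hx : IsLyndon x)
    (hM : IsLyndonFactorization M) : IsLyndonFactorization (lyndonCons x M) := by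
  induction M generalizing x with
  | nil => exact ⟨by simpa [lyndonCons], List.isChain_singleton x⟩
  | cons y M ih =>
    unfold lyndonCons
    split_ifs with hxy
    · exact ih (hx.append hM.head_isLyndon hxy) hM.tail
    · exact ⟨List.forall_mem_cons.mpr ⟨hx, hM.1⟩, hM.2.cons_cons hxy⟩

theorem flatten_lyndonFactorization (w : List α) : (lyndonFactorization w).flatten = w := by
  induction w with
  | nil => rfl
  | cons a w ih =>
    rw [lyndonFactorization, List.foldr_cons, flatten_lyndonCons, ← lyndonFactorization, ih]
    rfl

theorem isLyndonFactorization_lyndonFactorization (w : List α) :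
    IsLyndonFactorization (lyndonFactorization w) := by
  induction w with
  | nil => exact .nil
  | cons a w ih => exact isLyndonFactorization_lyndonCons (isLyndon_singleton a) ih

end LyndonFactorization

theorem chen_fox_lyndon_factorization_general {α : Type*} [LinearOrder α]
    (w : List α) :
    ∃! L : List (List α),
      L.flatten = w ∧ (∀ l ∈ L, IsLyndon l) ∧
      L.Chain' (fun x y => ¬ List.Lex (· < ·) x y) := by
  have hfac := isLyndonFactorization_lyndonFactorization w
  refine ⟨lyndonFactorization w, ⟨flatten_lyndonFactorization w, hfac⟩, ?_⟩
  rintro L ⟨hLw, hL⟩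
  exact IsLyndonFactorization.eq_of_flatten_eq hL hfac
    (hLw.trans (flatten_lyndonFactorization w).symm)

/-- Chen–Fox–Lyndon: any non-empty finite word over a totally ordered finite
alphabet is uniquely a non-increasing concatenation of Lyndon words. -/
theorem chen_fox_lyndon_factorization {α : Type*} [LinearOrder α] [Fintype α]
    (w : List α) (hw : w ≠ []) :
    ∃! L : List (List α),
      L.flatten = w ∧ (∀ l ∈ L, IsLyndon l) ∧
      L.Chain' (fun x y => ¬ List.Lex (· < ·) x y) :=
  chen_fox_lyndon_factorization_general w
end

section
/- For Lyndon words u and v over a totally ordered alphabet, the concatenation uv is a Lyndon word if and only if u < v in the lexicographic order. -/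
section aux
variable {α : Type*} [LinearOrder α]

lemma lex_eq_lt (l l' : List α) : List.Lex (· < ·) l l' ↔ l < l' := Iff.rfl

lemma aux_append_left (u : List α) {x y : List α} (h : List.Lex (· < ·) x y) :
    List.Lex (· < ·) (u ++ x) (u ++ y) := by
  induction u with
  | nil => exact h
  | cons a t ih => exact List.Lex.cons ih

lemma aux_le_append (u v : List α) : u ≤ u ++ v := by
  cases v with
  | nil => simp
  | cons b t =>
    apply le_of_lt
    show List.Lex (· < ·) u (u ++ b :: t)
    induction u with
    | nil => exact List.Lex.nil
    | cons a s ih => exact List.Lex.cons ih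

lemma aux_lex_append {u s : List α} (h : List.Lex (· < ·) u s)
    (hlen : s.length ≤ u.length) (w w' : List α) :
    List.Lex (· < ·) (u ++ w) (s ++ w') := by
  induction h with
  | nil => simp at hlen
  | @cons a l l' h ih => exact List.Lex.cons (ih (by simpa using hlen))
  | rel h => exact List.Lex.rel h

lemma aux_prefix_or {u v : List α} (h : List.Lex (· < ·) u v) :
    u <+: v ∨ ∀ w w', List.Lex (· < ·) (u ++ w) (v ++ w') := by
  induction h with
  | nil => exact Or.inl (List.nil_prefix)
  | @cons a l l' h ih =>
    rcases ih with hp | hl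
    · exact Or.inl (List.cons_prefix_cons.mpr ⟨rfl, hp⟩)
    · exact Or.inr fun w w' => List.Lex.cons (hl w w')
  | rel h => exact Or.inr fun w w' => List.Lex.rel h

end aux

/-- For Lyndon words `u` and `v`, the concatenation `u ++ v` is a Lyndon word
iff `u < v` lexicographically. -/
theorem lyndon_append_iff {α : Type*} [LinearOrder α] (u v : List α)
    (hu : IsLyndon u) (hv : IsLyndon v) :
    IsLyndon (u ++ v) ↔ List.Lex (· < ·) u v := by
  obtain ⟨hune, hu2⟩ := hu
  obtain ⟨hvne, hv2⟩ := hv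
  have hul : 0 < u.length := List.length_pos_iff.mpr hune
  have hvl : 0 < v.length := List.length_pos_iff.mpr hvne
  constructor
  · rintro ⟨-, h⟩
    have huv : List.Lex (· < ·) (u ++ v) v := by
      have := h u.length hul (by simp [hvl])
      simpa using this
    rw [lex_eq_lt] at huv ⊢
    by_contra hle
    push_neg at hle
    exact absurd (lt_of_le_of_lt (hle.trans (aux_le_append u v)) huv) (lt_irrefl _)
  · intro huv
    -- first: u ++ v < v
    have key : List.Lex (· < ·) (u ++ v) v := by
      rcases aux_prefix_or huv with ⟨t, rfl⟩ | hl
      · -- v = u ++ t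
        have htne : t ≠ [] := by
          rintro rfl
          simp at huv
        have hlt : u.length < (u ++ t).length := by
          simp [List.length_pos_iff.mpr htne]
        have := hv2 u.length hul hlt
        rw [List.drop_append_of_le_length (le_refl _)] at this
        simp at this
        exact aux_append_left u this
      · simpa using hl v []
    refine ⟨by simp [hune], fun i hi hilen => ?_⟩
    rcases lt_or_ge i u.length with hiu | hiu
    · -- i < |u| : drop i (u++v) = drop i u ++ v
      rw [List.drop_append_of_le_length hiu.le]
      have hlex : List.Lex (· < ·) u (u.drop i) := hu2 i hi hiu
      exact aux_lex_append hlex (by rw [List.length_drop]; exact Nat.sub_le u.length i) v v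
    · -- i ≥ |u|
      rw [List.drop_append, List.drop_eq_nil_of_le hiu, List.nil_append]
      rcases Nat.eq_or_lt_of_le hiu with heq | hlt
      · rw [← heq, Nat.sub_self]
        simpa using key
      · have hj : 0 < i - u.length := Nat.sub_pos_of_lt hlt
        have hjlen : i - u.length < v.length := by
          have : i < u.length + v.length := by simpa using hilen
          omega
        have h1 : List.Lex (· < ·) v (v.drop (i - u.length)) := hv2 _ hj hjlen
        exact (lex_eq_lt _ _).mpr (lt_trans ((lex_eq_lt _ _).mp key) ((lex_eq_lt _ _).mp h1))
end

section
/- Let w be an infinite word over an odd alphabet {a < b} (both a and b odd) all of whose blocks have odd length, starting with the letter a. Then every maximal block of a's in w begins at an even position and every maximal block of b's begins at an odd position (positions indexed from 0). -/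
/-- Over an odd alphabet `{a < b}`: in an infinite word over `{a, b}` starting with
`a` all of whose maximal blocks have odd length, every maximal block of `a`'s starts
at an even position and every maximal block of `b`'s starts at an odd position. -/
theorem block_positions_odd_alphabet (a b : ℕ) (ha : Odd a) (hb : Odd b) (hab : a < b)
    (w : ℕ → ℕ) (hw : ∀ n, w n = a ∨ w n = b) (h0 : w 0 = a)
    (hblocks : ∀ i j, i ≤ j → (i = 0 ∨ w (i - 1) ≠ w i) →
      (∀ k, i ≤ k → k ≤ j → w k = w i) → w (j + 1) ≠ w j → Odd (j + 1 - i)) :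
    ∀ i, (i = 0 ∨ w (i - 1) ≠ w i) →
      (w i = a → Even i) ∧ (w i = b → Odd i) := by
  classical
  intro i
  induction i using Nat.strong_induction_on with
  | _ i ih =>
    intro hstart
    rcases Nat.eq_zero_or_pos i with rfl | hpos
    · refine ⟨fun _ => Even.zero, fun hb0 => ?_⟩
      rw [h0] at hb0; omega
    · rcases hstart with h | hne
      · omega
      have hprev : i - 1 + 1 = i := Nat.succ_pred_eq_of_pos hpos
      have hex : ∃ m, ∀ k, m ≤ k → k ≤ i - 1 → w k = w (i - 1) :=
        ⟨i - 1, fun k h1 h2 => by rw [le_antisymm h2 h1]⟩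
      set i' := Nat.find hex with hi'def
      have hi'spec := Nat.find_spec hex
      have hi'le : i' ≤ i - 1 := Nat.find_le (fun k h1 h2 => by rw [le_antisymm h2 h1])
      have hwi' : w i' = w (i - 1) := hi'spec i' le_rfl hi'le
      have hstart' : i' = 0 ∨ w (i' - 1) ≠ w i' := by
        rcases Nat.eq_zero_or_pos i' with h0' | hp'
        · exact Or.inl h0'
        · right
          intro heq
          apply Nat.find_min hex (show i' - 1 < i' by omega)
          intro k h1 h2
          rcases Nat.lt_or_ge k i' with hk | hk
          · have : k = i' - 1 := by omega
            rw [this, heq, hwi']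
          · exact hi'spec k hk h2
      have hconst : ∀ k, i' ≤ k → k ≤ i - 1 → w k = w i' := by
        intro k h1 h2; rw [hi'spec k h1 h2, hwi']
      have hodd : Odd (i - 1 + 1 - i') :=
        hblocks i' (i - 1) hi'le hstart' hconst
          (by rw [hprev]; exact fun h => hne h.symm)
      rw [hprev] at hodd
      have ih' := ih i' (by omega) hstart'
      rcases hw i with hia | hib <;> rcases hw i' with h'a | h'b
      · exact absurd (by rw [← hwi', h'a, hia]) hne
      · obtain ⟨p, hp⟩ := ih'.2 h'b
        obtain ⟨q, hq⟩ := hodd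
        refine ⟨fun _ => ⟨p + q + 1, by omega⟩, fun hbb => ?_⟩
        rw [hia] at hbb; omega
      · obtain ⟨p, hp⟩ := ih'.1 h'a
        obtain ⟨q, hq⟩ := hodd
        refine ⟨fun haa => ?_, fun _ => ⟨p + q, by omega⟩⟩
        rw [hib] at haa; omega
      · exact absurd (by rw [← hwi', h'b, hib]) hne
end

section
/- If p ∈ {a < b}* is such that Φ⁻¹(p) is a prefix of an infinite smooth Lyndon word w, then p[0] = a. -/
/-- Strict lexicographic order on infinite words. -/
def InfLex {α : Type*} [LT α] (u v : ℕ → α) : Prop :=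
  ∃ k, (∀ j < k, u j = v j) ∧ u k < v k

/-- An infinite word is an infinite Lyndon word if it is lexicographically smaller
than all of its proper suffixes. -/
def IsInfLyndon {α : Type*} [LT α] (w : ℕ → α) : Prop :=
  ∀ i, 0 < i → InfLex w (fun n => w (n + i))

/-- Partial sums of an infinite sequence of block lengths. -/
def psum (u : ℕ → ℕ) : ℕ → ℕ
  | 0 => 0
  | k + 1 => psum u k + u k

/-- The index of the maximal block containing position `n` in the word whose block
lengths are given by `u`. -/
def blockIdx (u : ℕ → ℕ) (n : ℕ) : ℕ :=
  Nat.findGreatest (fun k => psum u k ≤ n) n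

/-- `expand x y u` is the infinite word `x^{u 0} y^{u 1} x^{u 2} ⋯` whose run-length
encoding is `u` and whose letters alternate between `x` and `y`, starting with `x`;
i.e. the pseudo-inverse `Δ⁻¹_x(u)` over the alphabet `{x, y}`. -/
def expand (x y : ℕ) (u : ℕ → ℕ) (n : ℕ) : ℕ :=
  if blockIdx u n % 2 = 0 then x else y

/-- `SmoothChain a b W` says that `W k` is the sequence of iterated run-length
encodings `Δᵏ(W 0)` over the alphabet `{a, b}`: each `W k` is a word over `{a, b}`
and is recovered from its run-length encoding `W (k+1)` by alternating expansion
starting with its own first letter. -/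
def SmoothChain (a b : ℕ) (W : ℕ → ℕ → ℕ) : Prop :=
  ∀ k, (∀ n, W k n = a ∨ W k n = b) ∧
    W k = expand (W k 0) (if W k 0 = a then b else a) (W (k + 1))

/-- An infinite word `w` is smooth over `{a, b}` if all its iterated run-length
encodings `Δᵏ(w)` are infinite words over `{a, b}`. -/
def IsSmooth (a b : ℕ) (w : ℕ → ℕ) : Prop :=
  ∃ W : ℕ → ℕ → ℕ, W 0 = w ∧ SmoothChain a b W

/-- If `Φ⁻¹(p)` is a prefix of an infinite smooth Lyndon word `w` over `{a < b}`
(equivalently, `p` is a nonempty prefix of `Φ(w)`, the sequence of first letters of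
the iterates `Δᵏ(w)`), then `p[0] = a`. -/
theorem first_letter_of_smooth_lyndon (a b : ℕ) (ha : 0 < a) (hab : a < b)
    (w : ℕ → ℕ) (W : ℕ → ℕ → ℕ) (hW0 : W 0 = w) (hW : SmoothChain a b W)
    (hLyn : IsInfLyndon w)
    (p : List ℕ) (hp : p ≠ [])
    (hpref : ∀ i (h : i < p.length), p.get ⟨i, h⟩ = W i 0) :
    p.head hp = a := by
  obtain ⟨k, heq, hlt⟩ := hLyn 1 one_pos
  simp only [] at heq hlt
  have hletters : ∀ n, w n = a ∨ w n = b := hW0 ▸ (hW 0).1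
  have h0k : ∀ j ≤ k, w 0 = w j := by
    intro j hj
    induction j with
    | zero => rfl
    | succ m ih =>
      rw [ih (Nat.le_of_succ_le hj), heq m (Nat.lt_of_succ_le hj)]
  have hwk : w k = a := by
    rcases hletters k with h | h
    · exact h
    · rcases hletters (k + 1) with h' | h' <;> simp only [h, h'] at hlt <;> omega
  have hlen : 0 < p.length := List.length_pos_iff.mpr hp
  have := hpref 0 hlen
  have hh : p.head hp = p.get ⟨0, hlen⟩ := by
    cases p with
    | nil => exact absurd rfl hp
    | cons x xs => rfl
  rw [hh, this, hW0]
  exact (h0k k le_rfl) ▸ hwk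
end

section
/- Over the alphabet {a < b} with a even and b odd, there is no infinite smooth word that is also an infinite Lyndon word. -/
lemma psum_succ (v : ℕ → ℕ) (k : ℕ) : psum v (k+1) = psum v k + v k := rfl

lemma psum_mono (v : ℕ → ℕ) {i j : ℕ} (h : i ≤ j) : psum v i ≤ psum v j := by
  induction j with
  | zero => exact le_of_eq (by rw [Nat.le_zero.mp h])
  | succ n ih =>
    rcases Nat.lt_succ_iff_lt_or_eq.mp (Nat.lt_succ_of_le h) with h' | h'
    · exact le_trans (ih (by omega)) (by rw [psum_succ]; omega)
    · rw [h']

lemma le_psum (v : ℕ → ℕ) (hv : ∀ n, 1 ≤ v n) (k : ℕ) : k ≤ psum v k := by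
  induction k with
  | zero => simp [psum]
  | succ n ih => rw [psum_succ]; have := hv n; omega

lemma blockIdx_eq (v : ℕ → ℕ) (hv : ∀ n, 1 ≤ v n) {k n : ℕ}
    (h1 : psum v k ≤ n) (h2 : n < psum v (k+1)) : blockIdx v n = k := by
  have hkn : k ≤ n := le_trans (le_psum v hv k) h1
  unfold blockIdx
  rw [Nat.findGreatest_eq_iff]
  refine ⟨hkn, fun _ => h1, ?_⟩
  intro m hm hmn hP
  have : psum v (k+1) ≤ psum v m := psum_mono v (by omega)
  omega

lemma expand_eq_of_mem {x y : ℕ} {v : ℕ → ℕ} (hv : ∀ n, 1 ≤ v n) {k n : ℕ}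
    (h1 : psum v k ≤ n) (h2 : n < psum v (k+1)) :
    expand x y v n = if k % 2 = 0 then x else y := by
  unfold expand
  rw [blockIdx_eq v hv h1 h2]

lemma block_spec (v : ℕ → ℕ) (hv : ∀ n, 1 ≤ v n) (n : ℕ) :
    psum v (blockIdx v n) ≤ n ∧ n < psum v (blockIdx v n + 1) := by
  unfold blockIdx
  constructor
  · exact Nat.findGreatest_spec (P := fun k => psum v k ≤ n) (Nat.zero_le n) (Nat.zero_le n)
  · rcases Nat.lt_or_ge n (Nat.findGreatest (fun k => psum v k ≤ n) n + 1) with h | h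
    · have := le_psum v hv (Nat.findGreatest (fun k => psum v k ≤ n) n + 1)
      omega
    · have := Nat.findGreatest_is_greatest (P := fun k => psum v k ≤ n)
        (Nat.lt_succ_self _) h
      simp only [not_le] at this
      exact this

lemma not_lyndon_of_drop {w : ℕ → ℕ} {N m : ℕ} (hN : 0 < N)
    (heq : ∀ j < m, w j = w (j + N)) (hlt : w (m + N) < w m) : ¬ IsInfLyndon w := by
  intro hly
  obtain ⟨k, hk, hklt⟩ := hly N hN
  simp only at hklt
  rcases lt_trichotomy k m with h | h | h
  · rw [heq k h] at hklt; exact lt_irrefl _ hklt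
  · subst h; exact lt_irrefl _ (hklt.trans hlt)
  · rw [hk m h] at hlt; exact lt_irrefl _ hlt


/-- Over `{a < b}` with `a` even and `b` odd, no infinite smooth word is an
infinite Lyndon word. -/
theorem no_smooth_lyndon_even_odd (a b : ℕ) (ha : 0 < a) (hab : a < b)
    (hae : Even a) (hbo : Odd b) :
    ∀ w : ℕ → ℕ, IsSmooth a b w → ¬ IsInfLyndon w := by
  rintro w ⟨W, hW0, hch⟩ hly
  have pa : a % 2 = 0 := Nat.even_iff.mp hae
  have pb : b % 2 = 1 := Nat.odd_iff.mp hbo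
  have ha2 : 2 ≤ a := by omega
  have hb3 : 3 ≤ b := by omega
  have hrange : ∀ k n, W k n = a ∨ W k n = b := fun k => (hch k).1
  have hpos : ∀ k n, 1 ≤ W k n := by
    intro k n; rcases hrange k n with h | h <;> omega
  have hge2 : ∀ k n, 2 ≤ W k n := by
    intro k n; rcases hrange k n with h | h <;> omega
  have hexp : ∀ k, W k = expand (W k 0) (if W k 0 = a then b else a) (W (k + 1)) :=
    fun k => (hch k).2
  -- general fact: positions 0 and 1 of each level carry the same letter
  have hG : ∀ k, W k 1 = W k 0 := by
    intro k
    have e1 := congrFun (hexp k) 1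
    have h1 : psum (W (k+1)) 0 ≤ 1 := Nat.zero_le 1
    have h2 : (1 : ℕ) < psum (W (k+1)) 1 := by
      have e : psum (W (k+1)) 1 = psum (W (k+1)) 0 + W (k+1) 0 := psum_succ _ 0
      have e0 : psum (W (k+1)) 0 = 0 := rfl
      have := hge2 (k+1) 0
      omega
    rw [expand_eq_of_mem (hpos (k+1)) h1 h2] at e1
    simpa using e1
  have hrw : ∀ n, w n = a ∨ w n = b := by rw [← hW0]; exact hrange 0
  -- the first letter of w is a
  have hw0 : w 0 = a := by
    obtain ⟨k, hk, hklt⟩ := hly 1 one_pos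
    simp only at hklt
    have hle : ∀ i, 0 < i → w 0 ≤ w i := by
      intro i hi
      obtain ⟨k', hk', hklt'⟩ := hly i hi
      simp only at hklt'
      rcases Nat.eq_zero_or_pos k' with rfl | h
      · simpa using le_of_lt hklt'
      · have := hk' 0 h; simp at this; omega
    rcases Nat.eq_zero_or_pos k with rfl | h
    · norm_num at hklt
      rcases hrw 0 with h0 | h0
      · exact h0
      · rcases hrw 1 with h1 | h1 <;> omega
    · have := hle k h
      rcases hrw 0 with h0 | h0
      · exact h0
      · rcases hrw k with h1 | h1
        · omega
        · rcases hrw (k+1) with h2 | h2 <;> omega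
  set u : ℕ → ℕ := W 1 with hu_def
  have hupos : ∀ n, 1 ≤ u n := hpos 1
  have hwexp : w = expand a b u := by
    have := hexp 0
    rw [hW0, hw0] at this
    simpa using this
  have hwblock : ∀ k n, psum u k ≤ n → n < psum u k + u k →
      w n = if k % 2 = 0 then a else b := by
    intro k n h1 h2
    rw [hwexp]
    exact expand_eq_of_mem hupos h1 (by rw [psum_succ]; omega)
  have hps0 : psum u 0 = 0 := rfl
  have hu1 : u 1 = u 0 := hG 1
  by_cases hA : ∃ i, u (2*i) = b
  · -- CASE A : some a-run of w has length b
    obtain ⟨i0, hi0⟩ := hA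
    have hu0 : u 0 = b := by
      by_contra hne
      have hu0a : u 0 = a := (hrange 1 0).resolve_right hne
      have hu1a : u 1 = a := by rw [hu1, hu0a]
      have hi0pos : 0 < i0 := by
        rcases Nat.eq_zero_or_pos i0 with rfl | h
        · simp at hi0; omega
        · exact h
      set N := psum u (2*i0) with hN_def
      have hNpos : 0 < N := by
        have := le_psum u hupos (2*i0); omega
      have hps1 : psum u 1 = a := by
        have e : psum u 1 = psum u 0 + u 0 := psum_succ u 0
        omega
      refine not_lyndon_of_drop hNpos (m := a) ?_ ?_ hly
      · intro j hj
        have hwj : w j = a := by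
          rw [hwblock 0 j (by omega) (by omega), if_pos (by omega)]
        have hwjN : w (j + N) = a := by
          rw [hwblock (2*i0) (j+N) (by omega) (by omega), if_pos (by omega)]
        rw [hwj, hwjN]
      · have hwa : w a = b := by
          rw [hwblock 1 a (by omega) (by omega), if_neg (by omega)]
        have hwaN : w (a + N) = a := by
          rw [hwblock (2*i0) (a+N) (by omega) (by omega), if_pos (by omega)]
        rw [hwa, hwaN]; omega
    have hub1 : u 1 = b := by rw [hu1, hu0]
    have hps1 : psum u 1 = b := by
      have e : psum u 1 = psum u 0 + u 0 := psum_succ u 0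
      omega
    -- key rule from the Lyndon property
    have hrule : ∀ i, u (2*i) = b → u (2*i+1) = b := by
      intro i hib
      by_contra hne
      have hia : u (2*i+1) = a := (hrange 1 (2*i+1)).resolve_right hne
      have hipos : 0 < i := by
        rcases Nat.eq_zero_or_pos i with rfl | h
        · simp at hia; omega
        · exact h
      set N := psum u (2*i) with hN_def
      have hNpos : 0 < N := by
        have := le_psum u hupos (2*i); omega
      have hps2i1 : psum u (2*i+1) = N + b := by
        have e : psum u (2*i+1) = psum u (2*i) + u (2*i) := psum_succ u (2*i)
        omega
      have hps2i2 : psum u (2*i+2) = N + b + a := by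
        have e : psum u (2*i+2) = psum u (2*i+1) + u (2*i+1) := psum_succ u (2*i+1)
        omega
      refine not_lyndon_of_drop hNpos (m := a + b) ?_ ?_ hly
      · intro j hj
        rcases Nat.lt_or_ge j b with hjb | hjb
        · have hwj : w j = a := by
            rw [hwblock 0 j (by omega) (by omega), if_pos (by omega)]
          have hwjN : w (j + N) = a := by
            rw [hwblock (2*i) (j+N) (by omega) (by omega), if_pos (by omega)]
          rw [hwj, hwjN]
        · have hwj : w j = b := by
            rw [hwblock 1 j (by omega) (by omega), if_neg (by omega)]
          have hwjN : w (j + N) = b := by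
            rw [hwblock (2*i+1) (j+N) (by omega) (by omega), if_neg (by omega)]
          rw [hwj, hwjN]
      · have hwm : w (a + b) = b := by
          rw [hwblock 1 (a+b) (by omega) (by omega), if_neg (by omega)]
        have hwmN : w (a + b + N) = a := by
          have := hupos (2*i+2)
          rw [hwblock (2*i+2) (a+b+N) (by omega) (by omega), if_pos (by omega)]
        rw [hwm, hwmN]; omega
    -- blocks of u are given by W 2
    have hu_exp : u = expand b a (W 2) := by
      have := hexp 1
      rw [← hu_def] at this
      rw [hu0] at this
      rw [this, if_neg (by omega : ¬ b = a)]
    have hublock : ∀ k n, psum (W 2) k ≤ n → n < psum (W 2) k + W 2 k →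
        u n = if k % 2 = 0 then b else a := by
      intro k n h1 h2
      rw [hu_exp]
      exact expand_eq_of_mem (hpos 2) h1 (by rw [psum_succ]; omega)
    -- every odd-indexed partial sum of W 2 is even
    have hS : ∀ k, k % 2 = 0 → psum (W 2) (k+1) % 2 = 0 := by
      intro k hk
      by_contra hodd
      have hlen : 2 ≤ W 2 k := hge2 2 k
      have hlen1 : 1 ≤ W 2 (k+1) := hpos 2 (k+1)
      have hPk : psum (W 2) (k+1) = psum (W 2) k + W 2 k := psum_succ _ k
      set p := psum (W 2) (k+1) - 1 with hp_def
      have hup : u p = b := by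
        rw [hublock k p (by omega) (by omega), if_pos hk]
      have hpe : p % 2 = 0 := by omega
      have h2p : 2 * (p / 2) = p := by omega
      have hnext : u (p+1) = b := by
        have := hrule (p/2) (by rw [h2p]; exact hup)
        rw [h2p] at this; exact this
      have hnexta : u (p+1) = a := by
        rw [hublock (k+1) (p+1) (by omega) (by omega), if_neg (by omega)]
      omega
    have hW2_0 : W 2 0 = a := by
      have h1 : psum (W 2) 1 % 2 = 0 := hS 0 rfl
      have e : psum (W 2) 1 = psum (W 2) 0 + W 2 0 := psum_succ _ 0
      have e0 : psum (W 2) 0 = 0 := rfl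
      rcases hrange 2 0 with h | h
      · exact h
      · omega
    have hW2pair : ∀ j, W 2 (2*j+1) = W 2 (2*j+2) := by
      intro j
      have h1 : psum (W 2) (2*j+1) % 2 = 0 := hS (2*j) (by omega)
      have h2 : psum (W 2) (2*j+3) % 2 = 0 := hS (2*j+2) (by omega)
      have e1 : psum (W 2) (2*j+2) = psum (W 2) (2*j+1) + W 2 (2*j+1) := psum_succ _ _
      have e2 : psum (W 2) (2*j+3) = psum (W 2) (2*j+2) + W 2 (2*j+2) := psum_succ _ _
      rcases hrange 2 (2*j+1) with x1 | x1 <;> rcases hrange 2 (2*j+2) with x2 | x2 <;> omega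
    -- level 3
    have hW2exp : W 2 = expand a b (W 3) := by
      have := hexp 2
      rw [hW2_0] at this
      rw [this, if_pos rfl]
    have hW2block : ∀ k n, psum (W 3) k ≤ n → n < psum (W 3) k + W 3 k →
        W 2 n = if k % 2 = 0 then a else b := by
      intro k n h1 h2
      rw [hW2exp]
      exact expand_eq_of_mem (hpos 3) h1 (by rw [psum_succ]; omega)
    have hQodd : ∀ m, 1 ≤ m → psum (W 3) m % 2 = 1 := by
      intro m hm
      by_contra hodd
      have hgem : m ≤ psum (W 3) m := le_psum _ (hpos 3) m
      obtain ⟨m', rfl⟩ : ∃ m', m = m' + 1 := ⟨m - 1, by omega⟩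
      obtain ⟨j, hj⟩ : ∃ j, psum (W 3) (m'+1) = 2*j+2 := ⟨psum (W 3) (m'+1) / 2 - 1, by omega⟩
      have em : psum (W 3) (m'+1) = psum (W 3) m' + W 3 m' := psum_succ _ m'
      have h1 : 1 ≤ W 3 m' := hpos 3 m'
      have h1' : 1 ≤ W 3 (m'+1) := hpos 3 (m'+1)
      have e1 : W 2 (2*j+1) = if m' % 2 = 0 then a else b :=
        hW2block m' (2*j+1) (by omega) (by omega)
      have e2 : W 2 (2*j+2) = if (m'+1) % 2 = 0 then a else b :=
        hW2block (m'+1) (2*j+2) (by omega) (by omega)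
      have hpair := hW2pair j
      rcases Nat.mod_two_eq_zero_or_one m' with hme | hme
      · rw [if_pos hme] at e1
        rw [if_neg (by omega)] at e2
        rw [e1, e2] at hpair; omega
      · rw [if_neg (by omega)] at e1
        rw [if_pos (by omega)] at e2
        rw [e1, e2] at hpair; omega
    have hQ1 : psum (W 3) 1 = W 3 0 := by
      have e : psum (W 3) 1 = psum (W 3) 0 + W 3 0 := psum_succ _ 0
      have e0 : psum (W 3) 0 = 0 := rfl
      omega
    have hQ2 : psum (W 3) 2 = W 3 0 + W 3 1 := by
      have e : psum (W 3) 2 = psum (W 3) 1 + W 3 1 := psum_succ _ 1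
      omega
    have hW3_0 : W 3 0 = b := by
      have := hQodd 1 le_rfl
      rcases hrange 3 0 with h | h <;> omega
    have hW3_1 : W 3 1 = a := by
      have h1 := hQodd 1 le_rfl
      have h2 := hQodd 2 (by omega)
      rcases hrange 3 1 with h | h <;> omega
    have := hG 3
    rw [hW3_0, hW3_1] at this
    omega
  · -- CASE B : all a-runs of w have length a
    push_neg at hA
    have hAa : ∀ i, u (2*i) = a := fun i => (hrange 1 (2*i)).resolve_right (hA i)
    have hu0a : u 0 = a := by have := hAa 0; simpa using this
    have hu_exp : u = expand a b (W 2) := by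
      have := hexp 1
      rw [← hu_def] at this
      rw [hu0a] at this
      rw [this, if_pos rfl]
    have hublock : ∀ k n, psum (W 2) k ≤ n → n < psum (W 2) k + W 2 k →
        u n = if k % 2 = 0 then a else b := by
      intro k n h1 h2
      rw [hu_exp]
      exact expand_eq_of_mem (hpos 2) h1 (by rw [psum_succ]; omega)
    by_cases hBb : ∃ i, u (2*i+1) = b
    · obtain ⟨i, hib⟩ := hBb
      set k := blockIdx (W 2) (2*i+1) with hk_def
      obtain ⟨hbs1, hbs2⟩ := block_spec (W 2) (hpos 2) (2*i+1)
      rw [← hk_def] at hbs1 hbs2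
      have elink : psum (W 2) (k+1) = psum (W 2) k + W 2 k := psum_succ _ k
      have hbs2' : 2*i+1 < psum (W 2) k + W 2 k := by omega
      have hkodd : k % 2 = 1 := by
        by_contra h
        have := hublock k (2*i+1) hbs1 hbs2'
        rw [if_pos (by omega)] at this
        omega
      have hPk : psum (W 2) k = 2*i+1 := by
        by_contra h
        have h' : psum (W 2) k ≤ 2*i := by omega
        have := hublock k (2*i) h' (by omega)
        rw [if_neg (by omega)] at this
        have := hAa i; omega
      have hPk1 : psum (W 2) k + W 2 k = 2*i+2 := by
        by_contra h
        have h' : 2*i+3 ≤ psum (W 2) k + W 2 k := by omega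
        have := hublock k (2*i+2) (by omega) (by omega)
        rw [if_neg (by omega)] at this
        have h2 := hAa (i+1)
        rw [show 2*(i+1) = 2*i+2 by ring] at h2
        omega
      have := hge2 2 k
      omega
    · push_neg at hBb
      have hBa : ∀ i, u (2*i+1) = a := fun i => (hrange 1 (2*i+1)).resolve_right (hBb i)
      have hall : ∀ n, u n = a := by
        intro n
        rcases Nat.even_or_odd n with ⟨m, hm⟩ | ⟨m, hm⟩
        · have := hAa m; rw [show 2*m = n by omega] at this; exact this
        · have := hBa m; rw [show 2*m+1 = n by omega] at this; exact this
      have hp0 : psum (W 2) 0 = 0 := rfl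
      have hp1 : psum (W 2) 1 = psum (W 2) 0 + W 2 0 := psum_succ _ 0
      have hub : u (psum (W 2) 1) = b := by
        rw [hublock 1 (psum (W 2) 1) le_rfl (by have := hpos 2 1; omega), if_neg (by omega)]
      have := hall (psum (W 2) 1)
      omega
end
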